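/- Let n ≥ 2. The simplicial complex Δ_n is shellable: there exists an ordering F_1, …, F_t (t = 2^n − 1) of the facets of Δ_n such that for all 1 ≤ i < j ≤ t there exists k < j with F_i ∩ F_j ⊆ F_k ∩ F_j and |F_j \ F_k| = 1. -/

import Mathlib

/-- A subset of the vertex set `{xᵢ, yᵢ, zᵢ : 1 ≤ i ≤ n}` (identified with
`Fin n × Fin 3`, where `(i,0) = xᵢ`, `(i,1) = yᵢ`, `(i,2) = zᵢ`) is a face of `Δₙ`
iff it contains no triple `{xᵢ, yᵢ, z_j}` with `i < j`. -/
def IsFaceOf (n : ℕ) (F : Finset (Fin n × Fin 3)) : Prop :=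
  ¬ ∃ i j : Fin n, i < j ∧ (i, 0) ∈ F ∧ (i, 1) ∈ F ∧ (j, 2) ∈ F

/-- A facet of `Δₙ` is a maximal face. -/
def IsFacetOf (n : ℕ) (F : Finset (Fin n × Fin 3)) : Prop :=
  IsFaceOf n F ∧ ∀ G : Finset (Fin n × Fin 3), IsFaceOf n G → F ⊆ G → F = G

/-- `F₁, …, F_t` is an enumeration of the facets of `Δₙ` which is a shelling:
for all `i < j` there exists `k < j` with `Fᵢ ∩ F_j ⊆ F_k ∩ F_j` and `|F_j \ F_k| = 1`. -/
def IsShelling (n t : ℕ) (F : Fin t → Finset (Fin n × Fin 3)) : Prop :=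
  Function.Injective F ∧
  (∀ G : Finset (Fin n × Fin 3), IsFacetOf n G ↔ ∃ k, F k = G) ∧
  ∀ i j : Fin t, i < j → ∃ k, k < j ∧ F i ∩ F j ⊆ F k ∩ F j ∧ (F j \ F k).card = 1

namespace Shell5

def memP (N i c : ℕ) : Prop :=
  (i < N.log2 → (c = 2 ∨ (c = 1 ↔ N.testBit i))) ∧ (N.log2 < i → c ≠ 2)

instance (N i c : ℕ) : Decidable (memP N i c) := by unfold memP; infer_instance

def Fc (n N : ℕ) : Finset (Fin n × Fin 3) :=
  Finset.univ.filter fun p => memP N p.1.val p.2.val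

lemma mem_Fc {n N : ℕ} {p : Fin n × Fin 3} : p ∈ Fc n N ↔ memP N p.1.val p.2.val := by
  simp [Fc]

lemma mem_Fc' {n N : ℕ} {i : Fin n} {c : Fin 3} : (i, c) ∈ Fc n N ↔ memP N i.val c.val :=
  mem_Fc

-- intro rules
lemma memP_z {N i : ℕ} (h : i ≤ N.log2) : memP N i 2 :=
  ⟨fun _ => Or.inl rfl, fun h' => absurd h' (by omega)⟩

lemma memP_x {N i : ℕ} (h : N.testBit i = false) : memP N i 0 :=
  ⟨fun _ => Or.inr (by simp [h]), fun _ => by omega⟩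

lemma memP_y {N i : ℕ} (h : N.testBit i = true) : memP N i 1 :=
  ⟨fun _ => Or.inr (by simp [h]), fun _ => by omega⟩

lemma memP_eq {N i : ℕ} (h1 : ¬ i < N.log2) (h2 : ¬ N.log2 < i) (c : ℕ) : memP N i c :=
  ⟨fun h => absurd h h1, fun h => absurd h h2⟩

lemma memP_xy {N i c : ℕ} (h : N.log2 < i) (hc : c ≠ 2) : memP N i c :=
  ⟨fun h' => by omega, fun _ => hc⟩

-- elim rules
lemma memP.z_le {N i : ℕ} (h : memP N i 2) : i ≤ N.log2 := by
  by_contra hh; exact h.2 (by omega) rfl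

lemma memP.bit_true {N i : ℕ} (h : memP N i 1) (hi : i < N.log2) : N.testBit i = true := by
  rcases h.1 hi with h' | h'
  · omega
  · exact h'.mp rfl

lemma memP.bit_false {N i : ℕ} (h : memP N i 0) (hi : i < N.log2) : N.testBit i = false := by
  rcases h.1 hi with h' | h'
  · omega
  · by_contra hb
    have := h'.mpr (by simpa using hb)
    omega

lemma val2 : ((2 : Fin 3) : ℕ) = 2 := rfl
lemma val1 : ((1 : Fin 3) : ℕ) = 1 := rfl
lemma val0 : ((0 : Fin 3) : ℕ) = 0 := rfl

lemma face_Fc (n N : ℕ) : IsFaceOf n (Fc n N) := by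
  rintro ⟨i, j, hij, h0, h1, h2⟩
  rw [mem_Fc', val0] at h0
  rw [mem_Fc', val1] at h1
  rw [mem_Fc', val2] at h2
  have hij' : i.val < j.val := hij
  have hi : ¬ (i.val < N.log2) := by
    intro h
    have a := h0.bit_false h
    have b := h1.bit_true h
    rw [a] at b; exact Bool.false_ne_true b
  have hj : j.val ≤ N.log2 := h2.z_le
  omega

lemma maximal_Fc {n N : ℕ} (hN1 : 1 ≤ N) (hN2 : N < 2 ^ n) :
    ∀ G, IsFaceOf n G → Fc n N ⊆ G → Fc n N = G := by
  intro G hG hsub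
  have hm : N.log2 < n := (Nat.log2_lt (by omega)).mpr hN2
  have hmem : ∀ c : Fin 3, ((⟨N.log2, hm⟩ : Fin n), c) ∈ Fc n N := by
    intro c
    rw [mem_Fc']
    exact memP_eq (Nat.lt_irrefl _) (Nat.lt_irrefl _) _
  apply Finset.Subset.antisymm hsub
  intro p hp
  rw [mem_Fc]
  by_contra hmemp
  rw [memP, not_and_or] at hmemp
  rcases hmemp with h | h
  · push_neg at h
    obtain ⟨hlt, h2c, hiff⟩ := h
    have hc3 : p.2.val < 3 := p.2.isLt
    have hp1 : ((p.1, (1 : Fin 3)) ∈ G ∧ (p.1, (0 : Fin 3)) ∈ G) := by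
      rcases hb : N.testBit p.1.val with _ | _
      · -- bit false: then p.2.val = 1, and (p.1, 0) ∈ Fc
        have hc1 : p.2 = 1 := by
          have : p.2.val = 1 := by
            rcases hiff with ⟨h', _⟩ | ⟨_, h'⟩
            · exact h'
            · rw [hb] at h'; exact absurd h' (by simp)
          exact Fin.ext (by rw [this, val1])
        refine ⟨by rwa [← hc1, Prod.mk.eta], hsub ?_⟩
        rw [mem_Fc', val0]
        exact memP_x hb
      · -- bit true: then p.2.val = 0, and (p.1, 1) ∈ Fc
        have hc1 : p.2 = 0 := by
          have : p.2.val = 0 := by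
            rcases hiff with ⟨_, h'⟩ | ⟨h', _⟩
            · exact absurd hb h'
            · omega
          exact Fin.ext (by rw [this, val0])
        refine ⟨hsub ?_, by rwa [← hc1, Prod.mk.eta]⟩
        rw [mem_Fc', val1]
        exact memP_y hb
    exact hG ⟨p.1, ⟨N.log2, hm⟩, Fin.lt_def.mpr hlt, hp1.2, hp1.1, hsub (hmem 2)⟩
  · push_neg at h
    obtain ⟨hlt, h2c⟩ := h
    have hc2 : p.2 = 2 := Fin.ext (by rw [h2c, val2])
    exact hG ⟨⟨N.log2, hm⟩, p.1, Fin.lt_def.mpr hlt, hsub (hmem 0), hsub (hmem 1),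
      by rwa [← hc2, Prod.mk.eta]⟩

def enc (f : ℕ → Bool) : ℕ → ℕ
  | 0 => 0
  | k + 1 => enc f k ||| (if f k then 2 ^ k else 0)

lemma testBit_enc (f : ℕ → Bool) (m b : ℕ) :
    (enc f m).testBit b = (decide (b < m) && f b) := by
  induction m with
  | zero => simp [enc]
  | succ k ih =>
    rw [enc, Nat.testBit_or, ih]
    by_cases hfk : f k
    · simp only [hfk, if_true, Nat.testBit_two_pow]
      by_cases hbk : b = k
      · subst hbk; simp [hfk]
      · have hd : decide (b < k) = decide (b < k + 1) := by
          simp only [decide_eq_decide]; omega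
        simp [Ne.symm hbk, hd]
    · simp only [hfk, if_false, Nat.zero_testBit, Bool.or_false]
      by_cases hbk : b = k
      · subst hbk; simp [hfk]
      · have hd : decide (b < k) = decide (b < k + 1) := by
          simp only [decide_eq_decide]; omega
        rw [hd]
        simp


lemma testBit_log2 {N : ℕ} (h : N ≠ 0) : N.testBit N.log2 = true := by
  have h1 := Nat.log2_self_le h
  have h2 := Nat.lt_log2_self (n := N)
  rw [Nat.testBit_eq_decide_div_mod_eq]
  have hd : N / 2 ^ N.log2 = 1 := by
    apply Nat.div_eq_of_lt_le <;> omega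
  simp [hd]

lemma log2_eq {N m : ℕ} (h1 : 2 ^ m ≤ N) (h2 : N < 2 ^ (m + 1)) : N.log2 = m := by
  have hN : N ≠ 0 := by
    have : 0 < 2 ^ m := Nat.two_pow_pos m
    omega
  have a := (Nat.log2_lt hN).mpr h2
  have b : ¬ N.log2 < m := fun hh => absurd ((Nat.log2_lt hN).mp hh) (by omega)
  omega

lemma testBit_false_of_log2_lt {N b : ℕ} (h : N.log2 < b) : N.testBit b = false := by
  apply Nat.testBit_lt_two_pow
  calc N < 2 ^ (N.log2 + 1) := Nat.lt_log2_self
    _ ≤ 2 ^ b := Nat.pow_le_pow_right (by norm_num) (by omega)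

/-- every face is contained in one of the `Fc`. -/
lemma face_subset {n : ℕ} (hn : 1 ≤ n) (F : Finset (Fin n × Fin 3)) (hF : IsFaceOf n F) :
    ∃ N, 1 ≤ N ∧ N < 2 ^ n ∧ F ⊆ Fc n N := by
  classical
  set T : Finset (Fin n) := Finset.univ.filter (fun i => (i, 0) ∈ F ∧ (i, 1) ∈ F) with hT
  set m : ℕ := if h : T.Nonempty then (T.min' h).val else n - 1 with hmdef
  have hmn : m < n := by
    rw [hmdef]
    split
    · exact (T.min' _).isLt
    · omega
  have hnotboth : ∀ i : Fin n, i.val < m → ¬ ((i, 0) ∈ F ∧ (i, 1) ∈ F) := by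
    intro i hi hboth
    have hiT : i ∈ T := by rw [hT]; simp [hboth.1, hboth.2]
    rw [hmdef] at hi
    split at hi
    · have := Finset.min'_le T i hiT
      rw [Fin.le_def] at this
      omega
    · exact absurd ⟨i, hiT⟩ ‹¬T.Nonempty›
  have hz : ∀ j : Fin n, (j, 2) ∈ F → j.val ≤ m := by
    intro j hj
    rw [hmdef]
    split
    · rename_i h
      set t0 := T.min' h with ht0
      have ht0T : t0 ∈ T := T.min'_mem h
      rw [hT, Finset.mem_filter] at ht0T
      by_contra hc
      exact hF ⟨t0, j, Fin.lt_def.mpr (by omega), ht0T.2.1, ht0T.2.2, hj⟩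
    · omega
  set f : ℕ → Bool := fun b => decide (∃ hb : b < n, ((⟨b, hb⟩ : Fin n), (1 : Fin 3)) ∈ F) with hf
  set N : ℕ := 2 ^ m ||| enc f m with hN
  have hbits : ∀ b, N.testBit b = (decide (b = m) || (decide (b < m) && f b)) := by
    intro b
    rw [hN, Nat.testBit_or, testBit_enc, Nat.testBit_two_pow]
    by_cases h : m = b
    · subst h; simp
    · simp [h, Ne.symm h]
  have hbm : N.testBit m = true := by rw [hbits]; simp
  have hlog : N.log2 = m := by
    apply log2_eq (Nat.ge_two_pow_of_testBit hbm)
    apply Nat.lt_pow_two_of_testBit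
    intro b hb
    rw [hbits]
    simp only [Bool.or_eq_false_iff]
    constructor
    · simp; omega
    · simp only [Bool.and_eq_false_iff]; left; simp; omega
  refine ⟨N, Nat.one_le_iff_ne_zero.mpr (by intro h0; rw [h0] at hbm; simp at hbm), ?_, ?_⟩
  · apply Nat.lt_pow_two_of_testBit
    intro b hb
    rw [hbits]
    simp only [Bool.or_eq_false_iff]
    constructor
    · simp; omega
    · simp only [Bool.and_eq_false_iff]; left; simp; omega
  · intro p hp
    rw [mem_Fc, memP, hlog]
    constructor
    · intro hlt
      by_cases h2 : p.2.val = 2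
      · exact Or.inl h2
      · refine Or.inr ?_
        rw [hbits]
        have hd1 : decide (p.1.val = m) = false := by
          simp only [decide_eq_false_iff_not]; omega
        have hd2 : decide (p.1.val < m) = true := by
          simp only [decide_eq_true_eq]; exact hlt
        rw [hd1, hd2]
        simp only [Bool.false_or, Bool.true_and]
        constructor
        · intro h1
          simp only [hf, decide_eq_true_eq]
          refine ⟨p.1.isLt, ?_⟩
          have : p.2 = 1 := Fin.ext (by rw [h1, val1])
          rw [Fin.eta]
          rwa [← this, Prod.mk.eta]
        · intro hbit
          simp only [hf, decide_eq_true_eq] at hbit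
          obtain ⟨hb', hmem1⟩ := hbit
          rw [Fin.eta] at hmem1
          by_contra h1
          have h0 : p.2.val = 0 := by
            have := p.2.isLt
            omega
          have hp2 : p.2 = 0 := Fin.ext (by rw [h0, val0])
          exact hnotboth p.1 hlt ⟨by rwa [← hp2, Prod.mk.eta], hmem1⟩
    · intro hgt h2
      have hp2 : p.2 = 2 := Fin.ext (by rw [h2, val2])
      have := hz p.1 (by rwa [← hp2, Prod.mk.eta])
      omega

lemma Fc_log2_le {n N M : ℕ} (hm : N.log2 < n) (h : Fc n N ⊆ Fc n M) : N.log2 ≤ M.log2 := by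
  have hmem : ((⟨N.log2, hm⟩ : Fin n), (2 : Fin 3)) ∈ Fc n N := by
    rw [mem_Fc', val2]
    exact memP_z (le_refl _)
  have := h hmem
  rw [mem_Fc', val2] at this
  exact this.z_le

lemma Fc_inj {n N M : ℕ} (hN1 : 1 ≤ N) (hN2 : N < 2 ^ n) (hM1 : 1 ≤ M) (hM2 : M < 2 ^ n)
    (h : Fc n N = Fc n M) : N = M := by
  have hmn : N.log2 < n := (Nat.log2_lt (by omega)).mpr hN2
  have hmm : M.log2 < n := (Nat.log2_lt (by omega)).mpr hM2
  have hlog : N.log2 = M.log2 :=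
    le_antisymm (Fc_log2_le hmn (fun x hx => h ▸ hx)) (Fc_log2_le hmm (fun x hx => h.symm ▸ hx))
  apply Nat.eq_of_testBit_eq
  intro b
  rcases lt_trichotomy b N.log2 with hb | hb | hb
  · have key : ∀ K : ℕ, K.log2 = N.log2 →
        (((⟨b, by omega⟩ : Fin n), (1 : Fin 3)) ∈ Fc n K ↔ K.testBit b = true) := by
      intro K hK
      rw [mem_Fc', val1]
      show memP K b 1 ↔ K.testBit b = true
      constructor
      · intro hmem; exact hmem.bit_true (by omega)
      · intro hbit; exact memP_y hbit
    have hiff : (N.testBit b = true) ↔ (M.testBit b = true) := by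
      rw [← key N rfl, ← key M hlog.symm, h]
    rcases hNb : N.testBit b with _ | _ <;> rcases hMb : M.testBit b with _ | _ <;>
      simp_all
  · subst hb
    rw [testBit_log2 (show N ≠ 0 by omega), hlog, testBit_log2 (show M ≠ 0 by omega)]
  · rw [testBit_false_of_log2_lt hb, testBit_false_of_log2_lt (by omega)]

lemma bits_A {N : ℕ} (b : ℕ) :
    (2 ^ (N.log2 - 1) ||| N % 2 ^ (N.log2 - 1)).testBit b =
      (decide (b = N.log2 - 1) || (decide (b < N.log2 - 1) && N.testBit b)) := by
  rw [Nat.testBit_or, Nat.testBit_mod_two_pow, Nat.testBit_two_pow]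
  by_cases h : N.log2 - 1 = b
  · subst h; simp
  · simp [h, Ne.symm h]

lemma log2_A {N : ℕ} (hm1 : 1 ≤ N.log2) :
    (2 ^ (N.log2 - 1) ||| N % 2 ^ (N.log2 - 1)).log2 = N.log2 - 1 := by
  apply log2_eq
  · apply Nat.ge_two_pow_of_testBit
    rw [bits_A]; simp
  · apply Nat.lt_pow_two_of_testBit
    intro b hb
    rw [bits_A]
    have h1 : decide (b = N.log2 - 1) = false := by
      simp only [decide_eq_false_iff_not]; omega
    have h2 : decide (b < N.log2 - 1) = false := by
      simp only [decide_eq_false_iff_not]; omega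
    rw [h1, h2]; simp

lemma sdiff_A {n N : ℕ} (hm1 : 1 ≤ N.log2) (hmn : N.log2 < n) :
    Fc n N \ Fc n (2 ^ (N.log2 - 1) ||| N % 2 ^ (N.log2 - 1)) =
      {((⟨N.log2, hmn⟩ : Fin n), (2 : Fin 3))} := by
  set m := N.log2 with hm
  set K := 2 ^ (m - 1) ||| N % 2 ^ (m - 1) with hKdef
  have hlogK : K.log2 = m - 1 := log2_A hm1
  ext p
  rw [Finset.mem_sdiff, Finset.mem_singleton, mem_Fc, mem_Fc]
  constructor
  · rintro ⟨hN, hK⟩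
    rcases lt_trichotomy p.1.val (m - 1) with hi | hi | hi
    · exfalso; apply hK
      constructor
      · intro _
        have hbit : K.testBit p.1.val = N.testBit p.1.val := by
          rw [hKdef, bits_A, ← hm]
          have h1 : decide (p.1.val = m - 1) = false := by
            simp only [decide_eq_false_iff_not]; omega
          have h2 : decide (p.1.val < m - 1) = true := by
            simp only [decide_eq_true_eq]; omega
          rw [h1, h2]; simp
        rw [hbit]
        exact hN.1 (by omega)
      · intro hgt
        rw [hlogK] at hgt
        omega
    · exfalso; exact hK (memP_eq (by omega) (by omega) _)
    · rcases lt_trichotomy p.1.val m with hi2 | hi2 | hi2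
      · omega
      · -- p.1.val = m : must have p.2.val = 2
        have hc : p.2.val = 2 := by
          by_contra hc
          exact hK (memP_xy (by omega) hc)
        have h1 : p.1 = (⟨m, hmn⟩ : Fin n) := Fin.ext hi2
        have h2 : p.2 = (2 : Fin 3) := Fin.ext (by rw [hc, val2])
        rw [← h1, ← h2, Prod.mk.eta]
      · exfalso
        have hc : p.2.val ≠ 2 := hN.2 hi2
        exact hK (memP_xy (by omega) hc)
  · rintro rfl
    constructor
    · exact memP_z (le_refl m)
    · intro hK
      have : m ≤ K.log2 := hK.z_le
      omega

lemma sdiff_B {n N b : ℕ} (hb : b < N.log2) (hmn : N.log2 < n) (hbit : N.testBit b = true) :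
    Fc n N \ Fc n (N ^^^ 2 ^ b) =
      {((⟨b, by omega⟩ : Fin n), (1 : Fin 3))} := by
  set m := N.log2 with hm
  set K := N ^^^ 2 ^ b with hKdef
  have hN0 : N ≠ 0 := by
    have := Nat.ge_two_pow_of_testBit hbit
    have : 0 < 2 ^ b := Nat.two_pow_pos b
    omega
  have hbitsK : ∀ b', K.testBit b' = ((N.testBit b').xor (decide (b = b'))) := by
    intro b'
    rw [hKdef, Nat.testBit_xor, Nat.testBit_two_pow]
  have hKb : K.testBit b = false := by rw [hbitsK]; simp [hbit]
  have hKne : ∀ b', b' ≠ b → K.testBit b' = N.testBit b' := by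
    intro b' hb'
    rw [hbitsK]
    simp [Ne.symm hb']
  have hKm : K.testBit m = true := by
    rw [hKne m (by omega), hm]
    exact testBit_log2 hN0
  have hlogK : K.log2 = m := by
    apply log2_eq (Nat.ge_two_pow_of_testBit hKm)
    apply Nat.lt_pow_two_of_testBit
    intro b' hb'
    rw [hKne b' (by omega)]
    exact testBit_false_of_log2_lt (by omega)
  ext p
  rw [Finset.mem_sdiff, Finset.mem_singleton, mem_Fc, mem_Fc]
  constructor
  · rintro ⟨hN, hK⟩
    by_cases hi : p.1.val = b
    · -- show p.2.val = 1
      have hc : p.2.val = 1 := by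
        rcases hN.1 (by omega) with hc | hc
        · exfalso
          apply hK
          constructor
          · intro _; exact Or.inl hc
          · intro _; omega
        · rw [hi] at hc
          exact hc.mpr hbit
      have h1 : p.1 = (⟨b, by omega⟩ : Fin n) := Fin.ext hi
      have h2 : p.2 = (1 : Fin 3) := Fin.ext (by rw [hc, val1])
      rw [← h1, ← h2, Prod.mk.eta]
    · exfalso; apply hK
      constructor
      · intro hlt
        rw [hKne p.1.val hi]
        exact hN.1 (by rw [hlogK] at hlt; omega)
      · intro hgt
        rw [hlogK] at hgt
        exact hN.2 hgt
  · rintro rfl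
    constructor
    · exact memP_y hbit
    · intro hK
      have := hK.bit_true (by rw [hlogK]; exact hb)
      rw [hKb] at this
      exact Bool.false_ne_true this

end Shell5

/-- `Δₙ` is shellable: there is a shelling order `F₁, …, F_t` (`t = 2ⁿ − 1`) of its facets. -/
theorem stmt_5 (n : ℕ) (hn : 2 ≤ n) :
    ∃ F : Fin (2 ^ n - 1) → Finset (Fin n × Fin 3), IsShelling n (2 ^ n - 1) F := by
  have hp4 : 4 ≤ 2 ^ n := by
    calc (4 : ℕ) = 2 ^ 2 := rfl
      _ ≤ 2 ^ n := Nat.pow_le_pow_right (by norm_num) hn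
  refine ⟨fun j => Shell5.Fc n (j.val + 1), ?_, ?_, ?_⟩
  · intro a b hab
    have ha := a.isLt
    have hb := b.isLt
    have := Shell5.Fc_inj (by omega) (by omega) (by omega) (by omega) hab
    exact Fin.ext (by omega)
  · intro G
    constructor
    · intro hG
      obtain ⟨N, h1, h2, hsub⟩ := Shell5.face_subset (by omega) G hG.1
      have hGN : G = Shell5.Fc n N := hG.2 _ (Shell5.face_Fc n N) hsub
      refine ⟨⟨N - 1, by omega⟩, ?_⟩
      show Shell5.Fc n (N - 1 + 1) = G
      rw [show N - 1 + 1 = N by omega]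
      exact hGN.symm
    · rintro ⟨k, rfl⟩
      have hk := k.isLt
      exact ⟨Shell5.face_Fc n _, Shell5.maximal_Fc (by omega) (by omega)⟩
  · intro i j hij
    have hij' : i.val < j.val := hij
    have hilt := i.isLt
    have hjlt := j.isLt
    set Ni := i.val + 1 with hNidef
    set Nj := j.val + 1 with hNjdef
    have hNjn : Nj < 2 ^ n := by omega
    have hNjlog : Nj.log2 < n := (Nat.log2_lt (by omega)).mpr hNjn
    have hle : Ni.log2 ≤ Nj.log2 := by
      have h1 : Nj < 2 ^ (Nj.log2 + 1) := Nat.lt_log2_self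
      have h2 : Ni < 2 ^ (Nj.log2 + 1) := by omega
      have := (Nat.log2_lt (show Ni ≠ 0 by omega)).mpr h2
      omega
    have hNj2 : 2 ^ Nj.log2 ≤ Nj := Nat.log2_self_le (by omega)
    by_cases hcase : Ni.log2 < Nj.log2
    · -- case A : drop-m witness
      have hm1 : 1 ≤ Nj.log2 := by omega
      set K := 2 ^ (Nj.log2 - 1) ||| Nj % 2 ^ (Nj.log2 - 1) with hKdef
      have hKbit : K.testBit (Nj.log2 - 1) = true := by
        rw [hKdef, Shell5.bits_A]; simp
      have hK1 : 1 ≤ K := by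
        have := Nat.ge_two_pow_of_testBit hKbit
        have : 0 < 2 ^ (Nj.log2 - 1) := Nat.two_pow_pos _
        omega
      have hKlt : K < 2 ^ Nj.log2 := by
        have hexp : Nj.log2 - 1 + 1 = Nj.log2 := by omega
        rw [← hexp]
        apply Nat.lt_pow_two_of_testBit
        intro b hb
        rw [hKdef, Shell5.bits_A]
        have h1 : decide (b = Nj.log2 - 1) = false := by
          simp only [decide_eq_false_iff_not]; omega
        have h2 : decide (b < Nj.log2 - 1) = false := by
          simp only [decide_eq_false_iff_not]; omega
        rw [h1, h2]; simp
      have hsd := Shell5.sdiff_A (N := Nj) hm1 hNjlog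
      rw [← hKdef] at hsd
      refine ⟨⟨K - 1, by omega⟩, ?_, ?_, ?_⟩
      · show K - 1 < j.val
        omega
      · intro p hp
        rw [Finset.mem_inter] at hp ⊢
        refine ⟨?_, hp.2⟩
        show p ∈ Shell5.Fc n (K - 1 + 1)
        rw [show K - 1 + 1 = K by omega]
        by_contra hpK
        have hmem : p ∈ Shell5.Fc n Nj \ Shell5.Fc n K :=
          Finset.mem_sdiff.mpr ⟨hp.2, hpK⟩
        rw [hsd, Finset.mem_singleton] at hmem
        have hpi := hp.1
        rw [hmem, Shell5.mem_Fc', Shell5.val2] at hpi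
        have : Nj.log2 ≤ Ni.log2 := hpi.z_le
        omega
      · show (Shell5.Fc n Nj \ Shell5.Fc n (K - 1 + 1)).card = 1
        rw [show K - 1 + 1 = K by omega, hsd, Finset.card_singleton]
    · -- case B : same log2, flip a bit
      have hmeq : Ni.log2 = Nj.log2 := by omega
      have hb : ∃ b, Nj.testBit b = true ∧ Ni.testBit b = false := by
        by_contra hcon
        push_neg at hcon
        have : Nj ≤ Ni := by
          apply Nat.le_of_testBit
          intro b hbb
          have := hcon b hbb
          simpa using this
        omega
      obtain ⟨b, hbj, hbi⟩ := hb
      have hbne : b ≠ Nj.log2 := by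
        intro h
        rw [h, ← hmeq] at hbi
        rw [Shell5.testBit_log2 (show Ni ≠ 0 by omega)] at hbi
        simp at hbi
      have hblt : b < Nj.log2 := by
        by_contra hc
        have : Nj.log2 < b := by omega
        rw [Shell5.testBit_false_of_log2_lt this] at hbj
        exact Bool.false_ne_true hbj
      set K := Nj ^^^ 2 ^ b with hKdef
      have hKb : K.testBit b = false := by
        rw [hKdef, Nat.testBit_xor, Nat.testBit_two_pow]
        simp [hbj]
      have hKne : ∀ b', b' ≠ b → K.testBit b' = Nj.testBit b' := by
        intro b' hb'
        rw [hKdef, Nat.testBit_xor, Nat.testBit_two_pow]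
        simp [Ne.symm hb']
      have hKm : K.testBit Nj.log2 = true := by
        rw [hKne _ (Ne.symm hbne)]
        exact Shell5.testBit_log2 (by omega)
      have hKlt : K < Nj := by
        apply Nat.lt_of_testBit b hKb hbj
        intro j' hj'
        exact hKne j' (by omega)
      have hK1 : 1 ≤ K := by
        have := Nat.ge_two_pow_of_testBit hKm
        have : 0 < 2 ^ Nj.log2 := Nat.two_pow_pos _
        omega
      have hsd := Shell5.sdiff_B (N := Nj) hblt hNjlog hbj
      rw [← hKdef] at hsd
      refine ⟨⟨K - 1, by omega⟩, ?_, ?_, ?_⟩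
      · show K - 1 < j.val
        omega
      · intro p hp
        rw [Finset.mem_inter] at hp ⊢
        refine ⟨?_, hp.2⟩
        show p ∈ Shell5.Fc n (K - 1 + 1)
        rw [show K - 1 + 1 = K by omega]
        by_contra hpK
        have hmem : p ∈ Shell5.Fc n Nj \ Shell5.Fc n K :=
          Finset.mem_sdiff.mpr ⟨hp.2, hpK⟩
        rw [hsd, Finset.mem_singleton] at hmem
        have hpi := hp.1
        rw [hmem, Shell5.mem_Fc', Shell5.val1] at hpi
        have hpi' : Shell5.memP Ni b 1 := hpi
        have : Ni.testBit b = true := hpi'.bit_true (by omega)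
        rw [hbi] at this
        exact Bool.false_ne_true this
      · show (Shell5.Fc n Nj \ Shell5.Fc n (K - 1 + 1)).card = 1
        rw [show K - 1 + 1 = K by omega, hsd, Finset.card_singleton]
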